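/- arXiv:2105.08368 — 6 statements merged into one kernel-verified Lean document; each statement's English description precedes it below -/
import Mathlib

section
/- With ψ defined as ψ(α) = inf_x { F(x) − inf F + α·D(x) }, ψ is right-continuous at 0 (i.e., ψ(α) → 0 as α → 0⁺) if and only if there exists a minimizing sequence (x_k) with F(x_k) → inf F and D(x_k) < +∞ for every k. -/
/-!
For `α > 0` the penalty `α D` is infinite off `dom D = {D < ⊤}` and, at a fixed point of
`dom D`, tends to `0` as `α → 0⁺`. Hence `ψ α → 0` iff the (real) number `inf F` is
approximated by values of `F` on `dom D`, i.e. iff a minimizing sequence lies in `dom D`.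
-/

open Filter Set Topology

theorem exists_seq_tendsto_iff_forall_gt_exists_lt {V α : Type*} [CompleteLinearOrder α]
    [TopologicalSpace α] [OrderTopology α] [FirstCountableTopology α] {f : V → α} {p : V → Prop}
    {a : α} (ha : a < ⊤) (hf : ∀ x, p x → a ≤ f x) :
    (∃ u : ℕ → V, Tendsto (fun k => f (u k)) atTop (𝓝 a) ∧ ∀ k, p (u k)) ↔
      ∀ b > a, ∃ x, p x ∧ f x < b := by
  constructor
  · rintro ⟨u, hu, hp⟩ b hb
    obtain ⟨k, hk⟩ := (hu.eventually_lt_const hb).exists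
    exact ⟨u k, hp k, hk⟩
  · intro h
    have hglb : IsGLB (f '' {x | p x}) a := by
      refine ⟨forall_mem_image.2 hf, fun b hb => not_lt.1 fun hab => ?_⟩
      obtain ⟨x, hpx, hfx⟩ := h b hab
      exact (hb (mem_image_of_mem f hpx)).not_gt hfx
    obtain ⟨x, hpx, -⟩ := h ⊤ ha
    obtain ⟨v, -, -, hv, hvmem⟩ :=
      hglb.exists_seq_antitone_tendsto ⟨f x, mem_image_of_mem f hpx⟩
    choose u hpu hfu using hvmem
    exact ⟨u, by simpa only [hfu] using hv, hpu⟩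

namespace EReal

variable {V : Type*} {F D : V → EReal} {r : ℝ}

theorem sub_coe_nonneg_of_le {x : EReal} (h : (r : EReal) ≤ x) : 0 ≤ x - r :=
  (sub_nonneg (.inr (coe_ne_top r)) (.inr (coe_ne_bot r))).2 h

theorem lt_top_of_coe_mul_lt_top {α : ℝ} (hα : 0 < α) {d : EReal} (h : (α : EReal) * d < ⊤) :
    d < ⊤ := by
  refine lt_top_iff_ne_top.2 fun hd => ?_
  rw [hd, coe_mul_top_of_pos hα] at h
  exact h.ne rfl

theorem exists_lt_of_tendsto_iInf_sub_add_mul (hF : ∀ x, (r : EReal) ≤ F x) (hD : ∀ x, 0 ≤ D x)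
    (h : Tendsto (fun α : ℝ => ⨅ x, (F x - r + α * D x)) (𝓝[>] 0) (𝓝 0)) :
    ∀ b > (r : EReal), ∃ x, D x < ⊤ ∧ F x < b := by
  intro b hb
  obtain ⟨c, hrc, hcb⟩ := lt_iff_exists_real_btwn.1 hb
  have hε : (0 : EReal) < (c - r : ℝ) :=
    EReal.coe_pos.2 (_root_.sub_pos.2 (EReal.coe_lt_coe_iff.1 hrc))
  obtain ⟨α, hψ, hα⟩ := ((h.eventually_lt_const hε).and self_mem_nhdsWithin).exists
  obtain ⟨x, hx⟩ := iInf_lt_iff.1 hψ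
  have hpen : 0 ≤ (α : EReal) * D x := mul_nonneg (EReal.coe_nonneg.2 hα.le) (hD x)
  have hgap : F x - r < (c - r : ℝ) := (le_add_of_nonneg_right hpen).trans_lt hx
  refine ⟨x, lt_top_of_coe_mul_lt_top hα ?_, ?_⟩
  · exact (le_add_of_nonneg_left (sub_coe_nonneg_of_le (hF x))).trans_lt
      (hx.trans (coe_lt_top _))
  · rw [EReal.sub_lt_iff (.inl (coe_ne_bot r)) (.inl (coe_ne_top r)), ← coe_add,
      _root_.sub_add_cancel] at hgap
    exact hgap.trans hcb

theorem tendsto_iInf_sub_add_mul_of_exists_lt (hF : ∀ x, (r : EReal) ≤ F x)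
    (hD : ∀ x, 0 ≤ D x) (h : ∀ b > (r : EReal), ∃ x, D x < ⊤ ∧ F x < b) :
    Tendsto (fun α : ℝ => ⨅ x, (F x - r + α * D x)) (𝓝[>] 0) (𝓝 0) := by
  refine tendsto_order.2 ⟨fun b hb => ?_, fun b hb => ?_⟩
  · filter_upwards [self_mem_nhdsWithin] with α hα
    refine hb.trans_le (le_iInf fun x => add_nonneg (sub_coe_nonneg_of_le (hF x)) ?_)
    exact mul_nonneg (EReal.coe_nonneg.2 hα.le) (hD x)
  obtain ⟨c, hc0, hcb⟩ := lt_iff_exists_real_btwn.1 hb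
  obtain ⟨x, hDx, hFx⟩ :=
    h (r + c : ℝ) (EReal.coe_lt_coe_iff.2 (lt_add_of_pos_right r (EReal.coe_pos.1 hc0)))
  lift D x to ℝ using ⟨hDx.ne, ((hD x).trans_lt' bot_lt_zero).ne'⟩ with d hd
  lift F x to ℝ using ⟨(hFx.trans (coe_lt_top _)).ne, ((hF x).trans_lt' (bot_lt_coe r)).ne'⟩
    with t ht
  have hcont : Tendsto (fun α : ℝ => t - r + α * d) (𝓝 0) (𝓝 (t - r)) :=
    (by fun_prop : Continuous fun α : ℝ => t - r + α * d).tendsto' 0 _ (by simp)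
  have htc : t - r < c := by linarith [EReal.coe_lt_coe_iff.1 hFx]
  filter_upwards [nhdsWithin_le_nhds (hcont.eventually_lt_const htc)] with α hα
  calc ⨅ y, (F y - r + α * D y) ≤ t - r + α * d := iInf_le_of_le x (by rw [hd, ht])
    _ = (t - r + α * d : ℝ) := by norm_cast
    _ < c := EReal.coe_lt_coe_iff.2 hα
    _ < b := hcb

end EReal

theorem stmt_1_general {V : Type*}
    (F : V → EReal) (D : V → EReal) (x₀ : V) (m : ℝ)
    (hlb : ∀ x, (m : EReal) ≤ F x) (hx₀ : F x₀ < ⊤)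
    (hD : ∀ x, 0 ≤ D x)
    (ψ : ℝ → EReal)
    (hψ : ∀ α : ℝ, ψ α = ⨅ x : V, (F x - (⨅ y : V, F y) + (α : EReal) * D x)) :
    Tendsto ψ (nhdsWithin 0 (Set.Ioi 0)) (nhds 0) ↔
      ∃ x : ℕ → V,
        Tendsto (fun k => F (x k)) atTop (nhds (⨅ y : V, F y)) ∧
        ∀ k, D (x k) < ⊤ := by
  obtain ⟨r, hr⟩ : ∃ r : ℝ, (r : EReal) = ⨅ y, F y :=
    ⟨_, EReal.coe_toReal ((iInf_le F x₀).trans_lt hx₀).ne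
      ((le_iInf hlb).trans_lt' (EReal.bot_lt_coe m)).ne'⟩
  have hF : ∀ x, (r : EReal) ≤ F x := hr ▸ iInf_le F
  rw [funext hψ, ← hr,
    exists_seq_tendsto_iff_forall_gt_exists_lt (p := (D · < ⊤)) (EReal.coe_lt_top r)
    fun x _ => hF x]
  exact ⟨EReal.exists_lt_of_tendsto_iInf_sub_add_mul hF hD,
    EReal.tendsto_iInf_sub_add_mul_of_exists_lt hF hD⟩

/-- `ψ` is right-continuous at `0` iff there exists a minimizing sequence `(x_k)`
with `F(x_k) → inf F` and `D(x_k) < +∞` for every `k`. -/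
theorem stmt_1 {V : Type*} [AddCommGroup V] [Module ℝ V]
    (F : V → EReal) (D : V → EReal) (x₀ : V) (m : ℝ)
    (hlb : ∀ x, (m : EReal) ≤ F x) (hx₀ : F x₀ < ⊤)
    (hD : ∀ x, 0 ≤ D x) (hD₀ : D x₀ = 0)
    (ψ : ℝ → EReal)
    (hψ : ∀ α : ℝ, ψ α = ⨅ x : V, (F x - (⨅ y : V, F y) + (α : EReal) * D x)) :
    Tendsto ψ (nhdsWithin 0 (Set.Ioi 0)) (nhds 0) ↔
      ∃ x : ℕ → V,
        Tendsto (fun k => F (x k)) atTop (nhds (⨅ y : V, F y)) ∧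
        ∀ k, D (x k) < ⊤ :=
  stmt_1_general F D x₀ m hlb hx₀ hD ψ hψ
end

section
/- With ψ defined as ψ(α) = inf_x { F(x) − inf F + α·D(x) }, the limit ψ'(0) := lim_{α→0⁺} ψ(α)/α is finite if and only if there exists a minimizing sequence (x_k) with F(x_k) → inf F such that the sequence (D(x_k)) is bounded. -/
/-!
For `α > 0` one has `ψ(α)/α = inf_x ((F x - inf F)/α + D x)`, visibly antitone in `α`, so the
limit at `0⁺` exists in `[0, ∞]` (it is the supremum) and is finite iff these infima are bounded
by some `M`. Such a bound at `α = 1/(k+1)` gives points `x_k` with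
`(F x_k - inf F)(k+1) + D x_k < M + 1`: a minimizing sequence along which `D < M + 1`.
Conversely, along a minimizing sequence with `D x_k ≤ M` each infimum is at most
`lim_k ((F x_k - inf F)/α + M) = M`.
-/

open Filter Set Topology

namespace EReal

lemma mul_coe_mul_coe_inv (a : EReal) {t : ℝ} (ht : t ≠ 0) :
    a * t * ((t⁻¹ : ℝ) : EReal) = a := by
  rw [mul_assoc, ← coe_mul, mul_inv_cancel₀ ht, coe_one, mul_one]

lemma mul_coe_inv_mul_coe (a : EReal) {t : ℝ} (ht : t ≠ 0) :
    a * ((t⁻¹ : ℝ) : EReal) * t = a := by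
  rw [mul_assoc, ← coe_mul, inv_mul_cancel₀ ht, coe_one, mul_one]

lemma iInf_mul_coe {ι : Sort*} (a : ι → EReal) {t : ℝ} (ht : 0 < t) :
    (⨅ i, a i) * t = ⨅ i, a i * t := by
  refine le_antisymm (le_iInf fun i => mul_le_mul_of_nonneg_right (iInf_le a i)
    (EReal.coe_nonneg.2 ht.le)) ?_
  have hinv : (⨅ i, a i * t) * ((t⁻¹ : ℝ) : EReal) ≤ ⨅ i, a i := le_iInf fun i => by
    simpa only [mul_coe_mul_coe_inv _ ht.ne'] using
      mul_le_mul_of_nonneg_right (iInf_le (fun i => a i * t) i)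
        (EReal.coe_nonneg.2 (inv_nonneg.2 ht.le))
  simpa only [mul_coe_inv_mul_coe _ ht.ne'] using
    mul_le_mul_of_nonneg_right hinv (EReal.coe_nonneg.2 ht.le)

lemma continuous_add_coe (r : ℝ) : Continuous fun a : EReal => a + r :=
  continuous_iff_continuousAt.2 fun _ =>
    (continuousAt_add (Or.inr (coe_ne_bot r)) (Or.inr (coe_ne_top r))).comp
      (continuousAt_id.prodMk continuousAt_const)

lemma tendsto_sub_coe_nhds_zero_iff {α : Type*} {l : Filter α} {u : α → EReal} {r : ℝ} :
    Tendsto (fun k => u k - r) l (𝓝 0) ↔ Tendsto u l (𝓝 (r : EReal)) := by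
  constructor <;> intro h
  · have h' := ((continuous_add_coe r).tendsto 0).comp h
    simpa only [Function.comp_def, sub_add_cancel, zero_add] using h'
  · have h' := ((continuous_add_coe (-r)).tendsto r).comp h
    rwa [← coe_add, add_neg_cancel, coe_zero, coe_neg] at h'

end EReal

theorem AntitoneOn.exists_tendsto_coe_nhdsGT_iff {q : ℝ → EReal} {a : ℝ}
    (hq : AntitoneOn q (Ioi a)) (hbot : ∀ x ∈ Ioi a, q x ≠ ⊥) :
    (∃ L : ℝ, Tendsto q (𝓝[>] a) (𝓝 (L : EReal))) ↔ ∃ M : ℝ, ∀ x ∈ Ioi a, q x ≤ M := by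
  have hlim := hq.tendsto_nhdsGT (OrderTop.bddAbove _)
  constructor
  · rintro ⟨L, hL⟩
    refine ⟨L, fun x hx => ?_⟩
    rw [tendsto_nhds_unique hL hlim]
    exact le_sSup (mem_image_of_mem q hx)
  · rintro ⟨M, hM⟩
    have ha : a + 1 ∈ Ioi a := lt_add_one a
    have hS_top : sSup (q '' Ioi a) ≠ ⊤ := ne_top_of_le_ne_top (EReal.coe_ne_top M)
      (sSup_le (forall_mem_image.2 hM))
    have hS_bot : sSup (q '' Ioi a) ≠ ⊥ :=
      ne_bot_of_le_ne_bot (hbot _ ha) (le_sSup (mem_image_of_mem q ha))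
    exact ⟨_, by rwa [EReal.coe_toReal hS_top hS_bot]⟩

section

variable {ι : Type*} {f g : ι → EReal}

lemma iInf_add_mul_mul_inv (hf : ∀ i, 0 ≤ f i) (hg : ∀ i, 0 ≤ g i) {α : ℝ} (hα : 0 < α) :
    (⨅ i, f i + α * g i) * ((α⁻¹ : ℝ) : EReal) = ⨅ i, f i * ((α⁻¹ : ℝ) : EReal) + g i := by
  rw [EReal.iInf_mul_coe _ (inv_pos.2 hα)]
  refine iInf_congr fun i => ?_
  rw [EReal.right_distrib_of_nonneg (hf i) (mul_nonneg (EReal.coe_nonneg.2 hα.le) (hg i)),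
    mul_comm (α : EReal), EReal.mul_coe_mul_coe_inv _ hα.ne']

lemma antitoneOn_iInf_mul_inv_add (hf : ∀ i, 0 ≤ f i) :
    AntitoneOn (fun α : ℝ => ⨅ i, f i * ((α⁻¹ : ℝ) : EReal) + g i) (Ioi 0) :=
  fun _ ha _ _ hab => iInf_mono fun i => add_le_add_left (mul_le_mul_of_nonneg_left
    (EReal.coe_le_coe_iff.2 (inv_anti₀ ha hab)) (hf i)) _

lemma exists_seq_tendsto_zero_of_iInf_mul_inv_add_le (hf : ∀ i, 0 ≤ f i) (hg : ∀ i, 0 ≤ g i)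
    {M : ℝ} (hM : ∀ α ∈ Ioi (0 : ℝ), ⨅ i, f i * ((α⁻¹ : ℝ) : EReal) + g i ≤ M) :
    ∃ x : ℕ → ι, Tendsto (fun k => f (x k)) atTop (𝓝 0) ∧ ∀ k, g (x k) ≤ (M + 1 : ℝ) := by
  have hk_pos (k : ℕ) : (0 : ℝ) < k + 1 := by positivity
  have hk (k : ℕ) : ∃ i, f i * ((k + 1 : ℝ) : EReal) + g i < (M + 1 : ℝ) := by
    have hMk := hM ((k : ℝ) + 1)⁻¹ (inv_pos.2 (hk_pos k))
    rw [inv_inv] at hMk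
    exact iInf_lt_iff.1 (hMk.trans_lt (EReal.coe_lt_coe_iff.2 (lt_add_one M)))
  choose x hx using hk
  refine ⟨x, ?_, fun k => ?_⟩
  · have hle (k : ℕ) : f (x k) ≤ ((M + 1) / (k + 1) : ℝ) := by
      have h : f (x k) * ((k + 1 : ℝ) : EReal) ≤ (M + 1 : ℝ) :=
        (le_add_of_nonneg_right (hg _)).trans (hx k).le
      simpa only [EReal.mul_coe_mul_coe_inv _ (hk_pos k).ne', ← EReal.coe_mul, ← div_eq_mul_inv]
        using mul_le_mul_of_nonneg_right h (EReal.coe_nonneg.2 (inv_nonneg.2 (hk_pos k).le))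
    have hlim : Tendsto (fun k : ℕ => (((M + 1) / (k + 1) : ℝ) : EReal)) atTop (𝓝 0) := by
      have h := (tendsto_one_div_add_atTop_nhds_zero_nat (𝕜 := ℝ)).const_mul (M + 1)
      rw [mul_zero] at h
      simpa only [Function.comp_def, mul_one_div, EReal.coe_zero] using
        (continuous_coe_real_ereal.tendsto 0).comp h
    exact tendsto_of_tendsto_of_tendsto_of_le_of_le tendsto_const_nhds hlim (fun k => hf _) hle
  · exact (le_add_of_nonneg_left (mul_nonneg (hf _) (EReal.coe_nonneg.2 (hk_pos k).le))).trans
      (hx k).le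

lemma iInf_mul_coe_add_le_of_tendsto {κ : Type*} {l : Filter κ} [l.NeBot] {x : κ → ι}
    (hx : Tendsto (fun k => f (x k)) l (𝓝 0)) {M : ℝ} (hM : ∀ k, g (x k) ≤ M) (t : ℝ) :
    ⨅ i, f i * (t : EReal) + g i ≤ M := by
  have hlim : Tendsto (fun k => f (x k) * (t : EReal) + M) l (𝓝 M) := by
    have h := ((EReal.continuous_add_coe M).tendsto _).comp
      (EReal.Tendsto.mul_const hx (Or.inr (EReal.coe_ne_bot t)) (Or.inr (EReal.coe_ne_top t)))
    simpa only [Function.comp_def, zero_mul, zero_add] using h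
  exact ge_of_tendsto' hlim fun k => (iInf_le _ (x k)).trans (add_le_add_right (hM k) _)

lemma exists_forall_iInf_mul_inv_add_le_iff (hf : ∀ i, 0 ≤ f i) (hg : ∀ i, 0 ≤ g i) :
    (∃ M : ℝ, ∀ α ∈ Ioi (0 : ℝ), ⨅ i, f i * ((α⁻¹ : ℝ) : EReal) + g i ≤ M) ↔
      ∃ x : ℕ → ι, Tendsto (fun k => f (x k)) atTop (𝓝 0) ∧ ∃ M : ℝ, ∀ k, g (x k) ≤ M := by
  constructor
  · rintro ⟨M, hM⟩
    obtain ⟨x, hx, hxM⟩ := exists_seq_tendsto_zero_of_iInf_mul_inv_add_le hf hg hM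
    exact ⟨x, hx, _, hxM⟩
  · rintro ⟨x, hx, M, hxM⟩
    exact ⟨M, fun α _ => iInf_mul_coe_add_le_of_tendsto hx hxM _⟩

end

theorem stmt_2_general {V : Type*} [AddCommGroup V] [Module ℝ V]
    (F : V → EReal) (D : V → EReal) (x₀ : V) (m : ℝ)
    (hlb : ∀ x, (m : EReal) ≤ F x) (hx₀ : F x₀ < ⊤)
    (hD : ∀ x, 0 ≤ D x)
    (ψ : ℝ → EReal)
    (hψ : ∀ α : ℝ, ψ α = ⨅ x : V, (F x - (⨅ y : V, F y) + (α : EReal) * D x)) :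
    (∃ L : ℝ, Tendsto (fun α : ℝ => ψ α * ((α⁻¹ : ℝ) : EReal))
        (nhdsWithin 0 (Set.Ioi 0)) (nhds (L : EReal))) ↔
      ∃ x : ℕ → V,
        Tendsto (fun k => F (x k)) atTop (nhds (⨅ y : V, F y)) ∧
        ∃ M : ℝ, ∀ k, D (x k) ≤ (M : EReal) := by
  have hinf_top : ⨅ y, F y ≠ ⊤ := ne_top_of_le_ne_top hx₀.ne (iInf_le F x₀)
  have hinf_bot : ⨅ y, F y ≠ ⊥ := ne_bot_of_le_ne_bot (EReal.coe_ne_bot m) (le_iInf hlb)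
  obtain ⟨r, hr⟩ : ∃ r : ℝ, ⨅ y, F y = r := ⟨_, (EReal.coe_toReal hinf_top hinf_bot).symm⟩
  have hgap (x : V) : 0 ≤ F x - r := EReal.sub_nonneg (Or.inr (EReal.coe_ne_top r))
    (Or.inr (EReal.coe_ne_bot r)) |>.2 (hr ▸ iInf_le F x)
  have hquot : EqOn (fun α : ℝ => ψ α * ((α⁻¹ : ℝ) : EReal))
      (fun α => ⨅ x, (F x - r) * ((α⁻¹ : ℝ) : EReal) + D x) (Ioi 0) := fun α hα => by
    simp only [hψ, hr]
    exact iInf_add_mul_mul_inv (f := fun x => F x - r) hgap hD hα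
  have hbot : ∀ α ∈ Ioi (0 : ℝ), ⨅ x, (F x - r) * ((α⁻¹ : ℝ) : EReal) + D x ≠ ⊥ :=
    fun α hα => ne_bot_of_le_ne_bot EReal.zero_ne_bot (le_iInf fun x =>
      add_nonneg (mul_nonneg (hgap x) (EReal.coe_nonneg.2 (inv_nonneg.2 (le_of_lt hα)))) (hD x))
  rw [exists_congr fun L => tendsto_congr' (eventuallyEq_nhdsWithin_of_eqOn hquot),
    (antitoneOn_iInf_mul_inv_add hgap).exists_tendsto_coe_nhdsGT_iff hbot,
    exists_forall_iInf_mul_inv_add_le_iff (f := fun x => F x - r) hgap hD, hr]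
  simp only [EReal.tendsto_sub_coe_nhds_zero_iff]

/-- `ψ'(0) = lim_{α→0⁺} ψ(α)/α` is finite iff there is a minimizing sequence `(x_k)`
with `F(x_k) → inf F` and `(D(x_k))` bounded. -/
theorem stmt_2 {V : Type*} [AddCommGroup V] [Module ℝ V]
    (F : V → EReal) (D : V → EReal) (x₀ : V) (m : ℝ)
    (hlb : ∀ x, (m : EReal) ≤ F x) (hx₀ : F x₀ < ⊤)
    (hD : ∀ x, 0 ≤ D x) (hD₀ : D x₀ = 0)
    (ψ : ℝ → EReal)
    (hψ : ∀ α : ℝ, ψ α = ⨅ x : V, (F x - (⨅ y : V, F y) + (α : EReal) * D x)) :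
    (∃ L : ℝ, Tendsto (fun α : ℝ => ψ α * ((α⁻¹ : ℝ) : EReal))
        (nhdsWithin 0 (Set.Ioi 0)) (nhds (L : EReal))) ↔
      ∃ x : ℕ → V,
        Tendsto (fun k => F (x k)) atTop (nhds (⨅ y : V, F y)) ∧
        ∃ M : ℝ, ∀ k, D (x k) ≤ (M : EReal) :=
  stmt_2_general F D x₀ m hlb hx₀ hD ψ hψ
end

section
/- If ψ'(0) := lim_{α→0⁺} ψ(α)/α is finite, then for any decreasing sequence α_k → 0 and any quasi-minimizers x_k satisfying F(x_k) − inf F + α_k D(x_k) ≤ ψ(α_k) + α_k², the sequence D(x_k) is bounded and F(x_k) → inf F. -/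
open Filter Set Topology

/-! Since `inf F` is finite and `x₀` is an admissible competitor, `ψ` is real-valued and
nonnegative on `[0, ∞)`, so `ψ(α)/α → L` forces `ψ(α) → 0`. Dropping one of the two nonnegative
terms of the quasi-minimality inequality at a time gives `D(x_k) ≤ ψ(α_k)/α_k + α_k`, bounded
because it converges, and `inf F ≤ F(x_k) ≤ inf F + ψ(α_k) + α_k²`, which tends to `inf F`. -/

theorem EReal.le_of_sub_add_mul_le {s a b : ℝ} {u v : EReal} (ha : 0 < a) (hu : (s : EReal) ≤ u)
    (hv : 0 ≤ v) (h : u - s + a * v ≤ b) : u ≤ (s + b : ℝ) ∧ v ≤ (b / a : ℝ) := by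
  have hu_top : u ≠ ⊤ := by
    rintro rfl
    have : (0 : EReal) ≤ a * v := mul_nonneg (EReal.coe_nonneg.2 ha.le) hv
    simp [EReal.top_add_of_ne_bot (ne_bot_of_le_ne_bot EReal.zero_ne_bot this)] at h
  lift u to ℝ using ⟨hu_top, ne_bot_of_le_ne_bot (EReal.coe_ne_bot s) hu⟩
  have hv_top : v ≠ ⊤ := by
    rintro rfl
    simp [EReal.mul_top_of_pos (EReal.coe_pos.2 ha), ← EReal.coe_sub] at h
  lift v to ℝ using ⟨hv_top, ne_bot_of_le_ne_bot EReal.zero_ne_bot hv⟩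
  norm_cast at hu hv h ⊢
  have hav : 0 ≤ a * v := mul_nonneg ha.le hv
  exact ⟨by linarith, (le_div_iff₀ ha).2 (by linarith)⟩

theorem EReal.exists_iInf_eq_coe {ι : Type*} {f : ι → EReal} {m : ℝ} (hm : ∀ i, (m : EReal) ≤ f i)
    {i₀ : ι} (hi₀ : f i₀ < ⊤) : ∃ s : ℝ, ⨅ i, f i = s :=
  ⟨_, (EReal.coe_toReal ((iInf_le f i₀).trans_lt hi₀).ne
    (ne_bot_of_le_ne_bot (EReal.coe_ne_bot m) (le_iInf hm))).symm⟩

section Penalty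

variable {V : Type*} {F D : V → EReal} {s a : ℝ}

theorem iInf_sub_add_mul_nonneg (hs : ∀ x, (s : EReal) ≤ F x) (hD : ∀ x, 0 ≤ D x) (ha : 0 ≤ a) :
    0 ≤ ⨅ x, (F x - s + a * D x) :=
  le_iInf fun x => add_nonneg ((EReal.sub_nonneg (Or.inr (EReal.coe_ne_top s))
    (Or.inr (EReal.coe_ne_bot s))).2 (hs x)) (mul_nonneg (EReal.coe_nonneg.2 ha) (hD x))

theorem iInf_sub_add_mul_lt_top {x₀ : V} (hx₀ : F x₀ < ⊤) (hD₀ : D x₀ = 0) :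
    ⨅ x, (F x - s + a * D x) < ⊤ := by
  refine iInf_lt_iff.2 ⟨x₀, ?_⟩
  rw [hD₀, mul_zero, add_zero]
  exact (EReal.sub_lt_iff (Or.inl (EReal.coe_ne_bot s)) (Or.inl (EReal.coe_ne_top s))).2
    (by rwa [EReal.top_add_coe])

theorem coe_toReal_iInf_sub_add_mul (hs : ∀ x, (s : EReal) ≤ F x) (hD : ∀ x, 0 ≤ D x)
    {x₀ : V} (hx₀ : F x₀ < ⊤) (hD₀ : D x₀ = 0) (ha : 0 ≤ a) :
    ((⨅ x, (F x - s + a * D x)).toReal : EReal) = ⨅ x, (F x - s + a * D x) :=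
  EReal.coe_toReal (iInf_sub_add_mul_lt_top hx₀ hD₀).ne
    (ne_bot_of_le_ne_bot EReal.zero_ne_bot (iInf_sub_add_mul_nonneg hs hD ha))

end Penalty

theorem tendsto_nhds_zero_of_tendsto_div {p : ℝ → ℝ} {L : ℝ}
    (h : Tendsto (fun a => p a / a) (𝓝[>] 0) (𝓝 L)) : Tendsto p (𝓝[>] 0) (𝓝 0) := by
  have hmul := h.mul (tendsto_nhdsWithin_of_tendsto_nhds (tendsto_id (x := 𝓝 (0 : ℝ))))
  rw [mul_zero] at hmul
  refine hmul.congr' (eventually_nhdsWithin_of_forall fun a (ha : 0 < a) => ?_)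
  exact div_mul_cancel₀ (p a) ha.ne'

theorem stmt_3_general {V : Type*} [AddCommGroup V] [Module ℝ V]
    (F : V → EReal) (D : V → EReal) (x₀ : V) (m : ℝ)
    (hlb : ∀ x, (m : EReal) ≤ F x) (hx₀ : F x₀ < ⊤)
    (hD : ∀ x, 0 ≤ D x) (hD₀ : D x₀ = 0)
    (ψ : ℝ → EReal)
    (hψ : ∀ α : ℝ, ψ α = ⨅ x : V, (F x - (⨅ y : V, F y) + (α : EReal) * D x))
    (L : ℝ)
    (hL : Tendsto (fun α : ℝ => ψ α * ((α⁻¹ : ℝ) : EReal))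
      (nhdsWithin 0 (Set.Ioi 0)) (nhds (L : EReal)))
    (α : ℕ → ℝ) (hαpos : ∀ k, 0 < α k)
    (hα0 : Tendsto α atTop (nhds 0))
    (x : ℕ → V)
    (hx : ∀ k, F (x k) - (⨅ y : V, F y) + (α k : EReal) * D (x k)
      ≤ ψ (α k) + ((α k ^ 2 : ℝ) : EReal)) :
    (∃ M : ℝ, ∀ k, D (x k) ≤ (M : EReal)) ∧
      Tendsto (fun k => F (x k)) atTop (nhds (⨅ y : V, F y)) := by
  obtain ⟨s, hs⟩ := EReal.exists_iInf_eq_coe hlb hx₀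
  have hsF : ∀ y, (s : EReal) ≤ F y := fun y => hs ▸ iInf_le F y
  rw [hs] at hψ hx ⊢
  set p : ℝ → ℝ := fun a => (ψ a).toReal
  have hψp : ∀ a, 0 ≤ a → ψ a = p a := fun a ha => by
    simp only [p, hψ, coe_toReal_iInf_sub_add_mul hsF hD hx₀ hD₀ ha]
  have hp_div : Tendsto (fun a => p a / a) (𝓝[>] 0) (𝓝 L) := by
    refine EReal.tendsto_coe.1 (hL.congr' (eventually_nhdsWithin_of_forall fun a ha => ?_))
    simp only [hψp a (le_of_lt ha), div_eq_mul_inv, EReal.coe_mul]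
  have hα : Tendsto α atTop (𝓝[>] 0) :=
    tendsto_nhdsWithin_iff.2 ⟨hα0, Eventually.of_forall hαpos⟩
  have hbound k := EReal.le_of_sub_add_mul_le (b := p (α k) + α k ^ 2) (hαpos k) (hsF (x k))
    (hD (x k)) (by rw [EReal.coe_add, ← hψp _ (hαpos k).le]; exact hx k)
  constructor
  · have hD_lim : Tendsto (fun k => (p (α k) + α k ^ 2) / α k) atTop (𝓝 L) := by
      have := (hp_div.comp hα).add hα0
      rw [add_zero] at this
      refine this.congr fun k => ?_
      rw [Function.comp_apply, add_div, sq, mul_div_cancel_right₀ _ (hαpos k).ne']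
    obtain ⟨M, hM⟩ := hD_lim.bddAbove_range
    exact ⟨M, fun k => (hbound k).2.trans (EReal.coe_le_coe_iff.2 (hM (mem_range_self k)))⟩
  · have hF_lim : Tendsto (fun k => s + (p (α k) + α k ^ 2)) atTop (𝓝 s) := by
      simpa using tendsto_const_nhds.add
        (((tendsto_nhds_zero_of_tendsto_div hp_div).comp hα).add (hα0.pow 2))
    exact tendsto_of_tendsto_of_tendsto_of_le_of_le tendsto_const_nhds
      (EReal.tendsto_coe.2 hF_lim) (fun k => hsF (x k)) (fun k => (hbound k).1)

/-- If `ψ'(0) = lim_{α→0⁺} ψ(α)/α` is finite, then for any decreasing positive sequence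
`α_k → 0` and quasi-minimizers `x_k` with
`F(x_k) − inf F + α_k D(x_k) ≤ ψ(α_k) + α_k²`, the sequence `D(x_k)` is bounded
and `F(x_k) → inf F`. -/
theorem stmt_3 {V : Type*} [AddCommGroup V] [Module ℝ V]
    (F : V → EReal) (D : V → EReal) (x₀ : V) (m : ℝ)
    (hlb : ∀ x, (m : EReal) ≤ F x) (hx₀ : F x₀ < ⊤)
    (hD : ∀ x, 0 ≤ D x) (hD₀ : D x₀ = 0)
    (ψ : ℝ → EReal)
    (hψ : ∀ α : ℝ, ψ α = ⨅ x : V, (F x - (⨅ y : V, F y) + (α : EReal) * D x))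
    (L : ℝ)
    (hL : Tendsto (fun α : ℝ => ψ α * ((α⁻¹ : ℝ) : EReal))
      (nhdsWithin 0 (Set.Ioi 0)) (nhds (L : EReal)))
    (α : ℕ → ℝ) (hαpos : ∀ k, 0 < α k) (hαanti : StrictAnti α)
    (hα0 : Tendsto α atTop (nhds 0))
    (x : ℕ → V)
    (hx : ∀ k, F (x k) - (⨅ y : V, F y) + (α k : EReal) * D (x k)
      ≤ ψ (α k) + ((α k ^ 2 : ℝ) : EReal)) :
    (∃ M : ℝ, ∀ k, D (x k) ≤ (M : EReal)) ∧
      Tendsto (fun k => F (x k)) atTop (nhds (⨅ y : V, F y)) :=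
  stmt_3_general F D x₀ m hlb hx₀ hD hD₀ ψ hψ L hL α hαpos hα0 x hx
end

section
/- Let τ be a probability measure, β > 0, and η_hyp(s) = s·arcsinh(s/β) − √(s² + β²) + β. For f, g ∈ L¹(τ) with L¹-norms at most K, the Bregman divergence D_{η̄_hyp}(f,g) satisfies D_{η̄_hyp}(f,g) ≥ (1/(2(K+β))) ‖f − g‖²_{L¹(τ)}. -/
/-!
Write `S(x) = √(x² + β²)`, so that `η_hyp'' = 1 / S`, and `W(a, b) = (2/3) (S(a) + 2 S(b))`.
Pointwise, `D(a, b) ≥ (a - b)² / W(a, b)`: the function `x ↦ D(x, b) - (x - b)² / W(x, b)`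
vanishes together with its derivative at `x = b`, and it is convex because the second derivative
of `(x - b)² / W(x, b)` is at most `1 / S(x)`; this comes down to `|x b + β²| ≤ S(x) S(b)` and the
AM-GM inequality `27 S(x) S(b)² ≤ (S(x) + 2 S(b))³`.
The weight is what Jensen's inequality produces in
`D(a, b) = (a - b)² ∫₀¹ (1 - λ) / S(b + λ(a - b)) dλ` once the convex `S` is bounded by its chord:
`W(a, b) = 4 ∫₀¹ (1 - λ) ((1 - λ) S(b) + λ S(a)) dλ`.
Integrating, the weighted Cauchy-Schwarz inequality gives `(∫ |f - g|)² ≤ (∫ D(f, g)) (∫ W(f, g))`,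
and `S(x) ≤ |x| + β` bounds `∫ W(f, g) ≤ 2 (K + β)`.
-/

open MeasureTheory Real

theorem isMinOn_univ_of_hasDerivAt_of_hasDerivAt_nonneg {f f' f'' : ℝ → ℝ} {b : ℝ}
    (hf : ∀ x, HasDerivAt f (f' x) x) (hf' : ∀ x, HasDerivAt f' (f'' x) x) (hf'' : 0 ≤ f'')
    (hb : f' b = 0) : IsMinOn f Set.univ b := by
  have hmono : Monotone f' := monotone_of_hasDerivAt_nonneg hf' hf''
  have hdiff : Differentiable ℝ f := fun x => (hf x).differentiableAt
  refine isMinOn_univ_of_deriv (hf b).continuousAt hdiff.differentiableOn hdiff.differentiableOn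
    (fun x hx => ?_) (fun x hx => ?_)
  all_goals
    rw [(hf x).deriv, ← hb]
    exact hmono hx.le

lemma hasDerivAt_sq_sub_div {W : ℝ → ℝ} {b x w' : ℝ} (hW : HasDerivAt W w' x)
    (hx : W x ≠ 0) :
    HasDerivAt (fun y => (y - b) ^ 2 / W y)
      (2 * (x - b) / W x - (x - b) ^ 2 * w' / W x ^ 2) x := by
  have h := (((hasDerivAt_id x).sub_const b).pow 2).div hW hx
  refine h.congr_deriv ?_
  simp only [id, Pi.pow_apply]
  field_simp
  ring

lemma hasDerivAt_deriv_sq_sub_div {W W' : ℝ → ℝ} {b x w'' : ℝ} (hW : HasDerivAt W (W' x) x)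
    (hW' : HasDerivAt W' w'' x) (hx : W x ≠ 0) :
    HasDerivAt (fun y => 2 * (y - b) / W y - (y - b) ^ 2 * W' y / W y ^ 2)
      (2 / W x - 4 * (x - b) * W' x / W x ^ 2 - (x - b) ^ 2 * w'' / W x ^ 2
        + 2 * (x - b) ^ 2 * W' x ^ 2 / W x ^ 3) x := by
  have hδ := (hasDerivAt_id x).sub_const b
  have h := ((hδ.const_mul 2).div hW hx).sub
    (((hδ.pow 2).mul hW').div (hW.pow 2) (pow_ne_zero 2 hx))
  refine h.congr_deriv ?_
  simp only [id, Pi.pow_apply, Pi.mul_apply]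
  field_simp
  ring

section Integral

variable {Ω : Type*} [MeasurableSpace Ω] {μ : Measure Ω}

theorem sq_integral_abs_le_integral_mul_integral {h w D : Ω → ℝ}
    (hh : AEStronglyMeasurable h μ) (hw : Integrable w μ) (hD : Integrable D μ)
    (hw_pos : ∀ ω, 0 < w ω) (hhD : ∀ ω, h ω ^ 2 / w ω ≤ D ω) :
    (∫ ω, |h ω| ∂μ) ^ 2 ≤ (∫ ω, D ω ∂μ) * ∫ ω, w ω ∂μ := by
  have hpt : ∀ c ω, 2 * c * |h ω| ≤ c ^ 2 * D ω + w ω := fun c ω => by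
    have hwω := hw_pos ω
    have hc : c ^ 2 * (h ω ^ 2 / w ω) ≤ c ^ 2 * D ω :=
      mul_le_mul_of_nonneg_left (hhD ω) (sq_nonneg c)
    have hsq : 0 ≤ (c * |h ω| - w ω) ^ 2 / w ω := by positivity
    have hexp : (c * |h ω| - w ω) ^ 2 / w ω
        = c ^ 2 * (h ω ^ 2 / w ω) - 2 * c * |h ω| + w ω := by
      field_simp
      rw [← sq_abs (h ω)]
      ring
    linarith
  have hh_int : Integrable (fun ω => |h ω|) μ := by
    refine Integrable.abs (Integrable.mono' ((hD.add hw).div_const 2) hh ?_)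
    filter_upwards with ω
    rw [Real.norm_eq_abs, Pi.add_apply]
    linarith [hpt 1 ω]
  have hquad (c : ℝ) :
      0 ≤ (∫ ω, D ω ∂μ) * (c * c) + (-2 * ∫ ω, |h ω| ∂μ) * c + ∫ ω, w ω ∂μ := by
    have hint := integral_mono (f := fun ω => 2 * c * |h ω|) (g := fun ω => c ^ 2 * D ω + w ω)
      (hh_int.const_mul (2 * c)) ((hD.const_mul (c ^ 2)).add hw) (hpt c)
    rw [integral_const_mul, integral_add (hD.const_mul _) hw, integral_const_mul] at hint
    linarith
  have hdiscrim := discrim_le_zero hquad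
  rw [discrim] at hdiscrim
  linarith

lemma sqrt_sq_add_sq_le_abs_add {β : ℝ} (hβ : 0 ≤ β) (x : ℝ) : √(x ^ 2 + β ^ 2) ≤ |x| + β :=
  sqrt_le_iff.mpr ⟨by positivity, by nlinarith [sq_abs x, abs_nonneg x]⟩

lemma MeasureTheory.Integrable.sqrt_sq_add_sq [IsFiniteMeasure μ] {f : Ω → ℝ}
    (hf : Integrable f μ) (β : ℝ) : Integrable (fun ω => √(f ω ^ 2 + β ^ 2)) μ := by
  refine Integrable.mono' (hf.abs.add (integrable_const |β|)) ?_
    (Filter.Eventually.of_forall fun ω => ?_)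
  · exact (continuous_sqrt.comp ((continuous_pow 2).add continuous_const)).comp_aestronglyMeasurable
      hf.aestronglyMeasurable
  · rw [Real.norm_of_nonneg (sqrt_nonneg _), ← sq_abs β]
    exact sqrt_sq_add_sq_le_abs_add (abs_nonneg β) (f ω)

lemma integral_sqrt_sq_add_sq_le [IsProbabilityMeasure μ] {f : Ω → ℝ} (hf : Integrable f μ)
    {β : ℝ} (hβ : 0 ≤ β) :
    ∫ ω, √(f ω ^ 2 + β ^ 2) ∂μ ≤ (∫ ω, |f ω| ∂μ) + β := by
  calc ∫ ω, √(f ω ^ 2 + β ^ 2) ∂μ ≤ ∫ ω, (|f ω| + β) ∂μ :=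
        integral_mono (hf.sqrt_sq_add_sq β) (hf.abs.add (integrable_const β))
          (sqrt_sq_add_sq_le_abs_add hβ <| f ·)
    _ = (∫ ω, |f ω| ∂μ) + β := by
        rw [integral_add hf.abs (integrable_const β), integral_const, probReal_univ, one_smul]

end Integral

section HyperbolicEntropy

variable {β : ℝ}

lemma hasDerivAt_sqrt_sq_add_sq (hβ : β ≠ 0) (x : ℝ) :
    HasDerivAt (fun y => √(y ^ 2 + β ^ 2)) (x / √(x ^ 2 + β ^ 2)) x := by
  have h := ((hasDerivAt_pow 2 x).add_const (β ^ 2)).sqrt (by positivity)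
  refine h.congr_deriv ?_
  field_simp
  ring

lemma hasDerivAt_div_sqrt_sq_add_sq (hβ : β ≠ 0) (x : ℝ) :
    HasDerivAt (fun y => y / √(y ^ 2 + β ^ 2)) (β ^ 2 / √(x ^ 2 + β ^ 2) ^ 3) x := by
  have hS : √(x ^ 2 + β ^ 2) ≠ 0 := by positivity
  have h := (hasDerivAt_id x).div (hasDerivAt_sqrt_sq_add_sq hβ x) hS
  refine h.congr_deriv ?_
  have hS2 : √(x ^ 2 + β ^ 2) ^ 2 = x ^ 2 + β ^ 2 := sq_sqrt (by positivity)
  simp only [id]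
  field_simp
  linear_combination hS2

lemma abs_mul_add_sq_le_sqrt_mul_sqrt (x b β : ℝ) :
    |x * b + β ^ 2| ≤ √(x ^ 2 + β ^ 2) * √(b ^ 2 + β ^ 2) := by
  rw [← sqrt_mul (by positivity)]
  apply abs_le_sqrt
  nlinarith [sq_nonneg (β * (x - b))]

noncomputable def hypEntropy (β x : ℝ) : ℝ := x * arsinh (x / β) - √(x ^ 2 + β ^ 2) + β

noncomputable def hypBregman (β a b : ℝ) : ℝ :=
  hypEntropy β a - hypEntropy β b - arsinh (b / β) * (a - b)

noncomputable def hypWeight (β a b : ℝ) : ℝ :=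
  2 / 3 * (√(a ^ 2 + β ^ 2) + 2 * √(b ^ 2 + β ^ 2))

lemma hasDerivAt_arsinh_div (hβ : 0 < β) (x : ℝ) :
    HasDerivAt (fun y => arsinh (y / β)) (√(x ^ 2 + β ^ 2))⁻¹ x := by
  have h := ((hasDerivAt_id x).div_const β).arsinh
  refine h.congr_deriv ?_
  have hS : √(x ^ 2 + β ^ 2) = β * √(1 + (x / β) ^ 2) := by
    rw [show x ^ 2 + β ^ 2 = β ^ 2 * (1 + (x / β) ^ 2) by field_simp; ring,
      sqrt_mul (sq_nonneg β), sqrt_sq hβ.le]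
  rw [hS, smul_eq_mul, id, mul_inv]
  ring

lemma hasDerivAt_hypEntropy (hβ : 0 < β) (x : ℝ) :
    HasDerivAt (hypEntropy β) (arsinh (x / β)) x := by
  have h := (((hasDerivAt_id x).mul (hasDerivAt_arsinh_div hβ x)).sub
    (hasDerivAt_sqrt_sq_add_sq hβ.ne' x)).add_const β
  refine h.congr_deriv ?_
  have : √(x ^ 2 + β ^ 2) ≠ 0 := by positivity
  simp only [id]
  field_simp
  ring

lemma hypWeight_pos (hβ : β ≠ 0) (a b : ℝ) : 0 < hypWeight β a b := by
  unfold hypWeight; positivity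

-- The left side is the second derivative of `x ↦ (x - b) ^ 2 / hypWeight β x b`.
lemma sq_sub_div_hypWeight_deriv2_le (hβ : 0 < β) (b x : ℝ) :
    2 / hypWeight β x b - 4 * (x - b) * (2 / 3 * (x / √(x ^ 2 + β ^ 2))) / hypWeight β x b ^ 2
      - (x - b) ^ 2 * (2 / 3 * (β ^ 2 / √(x ^ 2 + β ^ 2) ^ 3)) / hypWeight β x b ^ 2
      + 2 * (x - b) ^ 2 * (2 / 3 * (x / √(x ^ 2 + β ^ 2))) ^ 2 / hypWeight β x b ^ 3
      ≤ (√(x ^ 2 + β ^ 2))⁻¹ := by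
  have hbound := abs_le.mp (abs_mul_add_sq_le_sqrt_mul_sqrt x b β)
  unfold hypWeight
  set S := √(x ^ 2 + β ^ 2)
  set t := √(b ^ 2 + β ^ 2)
  have hS : 0 < S := by positivity
  have ht : 0 < t := by positivity
  have hS2 : S ^ 2 = x ^ 2 + β ^ 2 := sq_sqrt (by positivity)
  set σ := S + 2 * t
  have hσ : 0 < σ := by positivity
  have hX : S * σ - (x - b) * x = β ^ 2 + 2 * (S * t) + x * b := by
    simp only [σ]; linear_combination hS2
  have hAMGM : 27 * S * t ^ 2 ≤ σ ^ 3 := by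
    nlinarith [mul_nonneg (sq_nonneg (S - t)) (by positivity : (0:ℝ) ≤ S + 8 * t)]
  have hkey : 3 * (S * σ - (x - b) * x) ^ 2 ≤ S * σ ^ 3 := by
    rw [hX]
    have h0 : 0 ≤ β ^ 2 + 2 * (S * t) + x * b := by linarith
    have h1 : β ^ 2 + 2 * (S * t) + x * b ≤ 3 * (S * t) := by linarith
    nlinarith [mul_le_mul h1 h1 h0 (by positivity), mul_le_mul_of_nonneg_left hAMGM hS.le]
  rw [← sub_nonneg]
  have hid : S⁻¹ - (2 / (2 / 3 * σ) - 4 * (x - b) * (2 / 3 * (x / S)) / (2 / 3 * σ) ^ 2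
      - (x - b) ^ 2 * (2 / 3 * (β ^ 2 / S ^ 3)) / (2 / 3 * σ) ^ 2
      + 2 * (x - b) ^ 2 * (2 / 3 * (x / S)) ^ 2 / (2 / 3 * σ) ^ 3)
      = (S * (S * σ ^ 3 - 3 * (S * σ - (x - b) * x) ^ 2) + 3 / 2 * (x - b) ^ 2 * β ^ 2 * σ)
        / (S ^ 3 * σ ^ 3) := by
    field_simp
    ring
  rw [hid]
  exact div_nonneg (add_nonneg (mul_nonneg hS.le (sub_nonneg.mpr hkey)) (by positivity))
    (by positivity)

lemma sq_sub_div_hypWeight_le_hypBregman (hβ : 0 < β) (a b : ℝ) :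
    (a - b) ^ 2 / hypWeight β a b ≤ hypBregman β a b := by
  set W := fun y => hypWeight β y b
  set W' := fun y => 2 / 3 * (y / √(y ^ 2 + β ^ 2))
  have hW : ∀ y, HasDerivAt W (W' y) y := fun y => by
    simpa [W, W', hypWeight] using
      ((hasDerivAt_sqrt_sq_add_sq hβ.ne' y).add_const (2 * √(b ^ 2 + β ^ 2))).const_mul (2 / 3)
  have hW' : ∀ y, HasDerivAt W' (2 / 3 * (β ^ 2 / √(y ^ 2 + β ^ 2) ^ 3)) y := fun y =>
    (hasDerivAt_div_sqrt_sq_add_sq hβ.ne' y).const_mul (2 / 3)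
  have hW0 : ∀ y, W y ≠ 0 := fun y => (hypWeight_pos hβ.ne' y b).ne'
  set G := fun y => hypBregman β y b - (y - b) ^ 2 / W y
  set G' := fun y => arsinh (y / β) - arsinh (b / β)
    - (2 * (y - b) / W y - (y - b) ^ 2 * W' y / W y ^ 2)
  have hG : ∀ y, HasDerivAt G (G' y) y := fun y => by
    have h := (((hasDerivAt_hypEntropy hβ y).sub_const (hypEntropy β b)).sub
      (((hasDerivAt_id y).sub_const b).const_mul (arsinh (b / β)))).sub
      (hasDerivAt_sq_sub_div (b := b) (hW y) (hW0 y))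
    exact h.congr_deriv (by simp [G'])
  have hG' : ∀ y, HasDerivAt G' ((√(y ^ 2 + β ^ 2))⁻¹
      - (2 / W y - 4 * (y - b) * W' y / W y ^ 2
        - (y - b) ^ 2 * (2 / 3 * (β ^ 2 / √(y ^ 2 + β ^ 2) ^ 3)) / W y ^ 2
        + 2 * (y - b) ^ 2 * W' y ^ 2 / W y ^ 3)) y := fun y =>
    ((hasDerivAt_arsinh_div hβ y).sub_const _).sub
      (hasDerivAt_deriv_sq_sub_div (hW y) (hW' y) (hW0 y))
  have hmin := isMinOn_univ_of_hasDerivAt_of_hasDerivAt_nonneg (b := b) hG hG'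
    (fun y => sub_nonneg.mpr (sq_sub_div_hypWeight_deriv2_le hβ b y)) (by simp [G'])
  simpa [G, hypBregman] using hmin (Set.mem_univ a)

end HyperbolicEntropy

theorem stmt_5_general {Ω : Type*} [MeasurableSpace Ω] (τ : Measure Ω) [IsProbabilityMeasure τ]
    (β K : ℝ) (hβ : 0 < β)
    (f g : Ω → ℝ) (hf : Integrable f τ) (hg : Integrable g τ)
    (hηf : Integrable (fun ω => f ω * Real.arsinh (f ω / β)
      - Real.sqrt ((f ω) ^ 2 + β ^ 2) + β) τ)
    (hηg : Integrable (fun ω => g ω * Real.arsinh (g ω / β)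
      - Real.sqrt ((g ω) ^ 2 + β ^ 2) + β) τ)
    (hcross : Integrable (fun ω => Real.arsinh (g ω / β) * (f ω - g ω)) τ)
    (hfK : ∫ ω, |f ω| ∂τ ≤ K) (hgK : ∫ ω, |g ω| ∂τ ≤ K) :
    1 / (2 * (K + β)) * (∫ ω, |f ω - g ω| ∂τ) ^ 2 ≤
      ∫ ω, ((f ω * Real.arsinh (f ω / β) - Real.sqrt ((f ω) ^ 2 + β ^ 2) + β)
        - (g ω * Real.arsinh (g ω / β) - Real.sqrt ((g ω) ^ 2 + β ^ 2) + β)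
        - Real.arsinh (g ω / β) * (f ω - g ω)) ∂τ := by
  have hB : Integrable (fun ω => hypBregman β (f ω) (g ω)) τ := (hηf.sub hηg).sub hcross
  have hw : Integrable (fun ω => hypWeight β (f ω) (g ω)) τ :=
    ((hf.sqrt_sq_add_sq β).add ((hg.sqrt_sq_add_sq β).const_mul 2)).const_mul (2 / 3)
  have hw_le : ∫ ω, hypWeight β (f ω) (g ω) ∂τ ≤ 2 * (K + β) := by
    simp only [hypWeight]
    rw [integral_const_mul,
      integral_add (hf.sqrt_sq_add_sq β) ((hg.sqrt_sq_add_sq β).const_mul 2), integral_const_mul]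
    linarith [integral_sqrt_sq_add_sq_le hf hβ.le, integral_sqrt_sq_add_sq_le hg hβ.le]
  have hbound (ω : Ω) := sq_sub_div_hypWeight_le_hypBregman hβ (f ω) (g ω)
  have hCS := sq_integral_abs_le_integral_mul_integral (hf.sub hg).aestronglyMeasurable hw hB
    (fun ω => hypWeight_pos hβ.ne' (f ω) (g ω)) hbound
  have hB_nonneg : 0 ≤ ∫ ω, hypBregman β (f ω) (g ω) ∂τ := integral_nonneg fun ω =>
    (div_nonneg (sq_nonneg _) (hypWeight_pos hβ.ne' _ _).le).trans (hbound ω)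
  have hK0 : 0 ≤ K := (integral_nonneg fun ω => abs_nonneg (f ω)).trans hfK
  rw [one_div_mul_eq_div, div_le_iff₀ (by positivity)]
  exact hCS.trans (mul_le_mul_of_nonneg_left hw_le hB_nonneg)

/-- Strong convexity of the Bregman divergence of the hyperbolic entropy
`η_hyp(s) = s·arcsinh(s/β) − √(s²+β²) + β` over an `L¹`-ball of radius `K`. -/
theorem stmt_5 {Ω : Type*} [MeasurableSpace Ω] (τ : Measure Ω) [IsProbabilityMeasure τ]
    (β K : ℝ) (hβ : 0 < β) (hK : 0 < K)
    (f g : Ω → ℝ) (hf : Integrable f τ) (hg : Integrable g τ)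
    (hηf : Integrable (fun ω => f ω * Real.arsinh (f ω / β)
      - Real.sqrt ((f ω) ^ 2 + β ^ 2) + β) τ)
    (hηg : Integrable (fun ω => g ω * Real.arsinh (g ω / β)
      - Real.sqrt ((g ω) ^ 2 + β ^ 2) + β) τ)
    (hcross : Integrable (fun ω => Real.arsinh (g ω / β) * (f ω - g ω)) τ)
    (hfK : ∫ ω, |f ω| ∂τ ≤ K) (hgK : ∫ ω, |g ω| ∂τ ≤ K) :
    1 / (2 * (K + β)) * (∫ ω, |f ω - g ω| ∂τ) ^ 2 ≤
      ∫ ω, ((f ω * Real.arsinh (f ω / β) - Real.sqrt ((f ω) ^ 2 + β ^ 2) + β)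
        - (g ω * Real.arsinh (g ω / β) - Real.sqrt ((g ω) ^ 2 + β ^ 2) + β)
        - Real.arsinh (g ω / β) * (f ω - g ω)) ∂τ :=
  stmt_5_general τ β K hβ f g hf hg hηf hηg hcross hfK hgK
end

section
/- Let τ be a probability measure, p ∈ [1,2], β > 0, and f, g ∈ L²(τ). If ‖f‖_{L¹(τ)} ≤ K, then ∫ |g|² (f² + β²)^{(p−2)/2} dτ ≥ (K + β)^{p−2} ‖g‖²_{L¹(τ)}. -/
open MeasureTheory Real

/-!
Cauchy–Schwarz with the factors `|g| w^{1/2}` and `w^{-1/2}`, where `w = (f² + β²)^{(p-2)/2}`,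
bounds `‖g‖_{L¹}²` by `∫ g² w` times `∫ (f² + β²)^{(2-p)/2}`. The latter is at most
`∫ (|f| + β)^{2-p}`, and since `t ↦ t^{2-p}` is concave for `p ∈ [1, 2]`, Jensen's inequality
bounds it by `(‖f‖_{L¹} + β)^{2-p} ≤ (K + β)^{2-p}`.
-/

theorem rpow_le_one_add {x q : ℝ} (hx : 0 ≤ x) (hq₀ : 0 ≤ q) (hq₁ : q ≤ 1) : x ^ q ≤ 1 + x := by
  rcases le_total x 1 with h | h
  · linarith [rpow_le_one hx h hq₀]
  · linarith [rpow_le_self_of_one_le h hq₁]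

theorem rpow_sq_add_sq_le (x : ℝ) {β r : ℝ} (hβ : 0 ≤ β) (hr : 0 ≤ r) :
    (x ^ 2 + β ^ 2) ^ (r / 2) ≤ (|x| + β) ^ r := by
  have hsq : x ^ 2 + β ^ 2 ≤ (|x| + β) ^ 2 := by nlinarith [abs_nonneg x, sq_abs x]
  calc (x ^ 2 + β ^ 2) ^ (r / 2) ≤ ((|x| + β) ^ 2) ^ (r / 2) := by gcongr
    _ = (|x| + β) ^ r := by
      rw [← rpow_natCast, ← rpow_mul (by positivity)]
      congr 1
      ring

section

variable {α : Type*} [MeasurableSpace α] {μ : Measure α}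

theorem sq_integral_mul_le_integral_sq_mul_integral_sq {a b : α → ℝ}
    (ha₀ : 0 ≤ᵐ[μ] a) (hb₀ : 0 ≤ᵐ[μ] b) (ha : MemLp a 2 μ) (hb : MemLp b 2 μ) :
    (∫ x, a x * b x ∂μ) ^ 2 ≤ (∫ x, a x ^ 2 ∂μ) * ∫ x, b x ^ 2 ∂μ := by
  have hHolder := integral_mul_le_Lp_mul_Lq_of_nonneg Real.HolderConjugate.two_two ha₀ hb₀
    (by simpa using ha) (by simpa using hb)
  simp only [rpow_two, ← sqrt_eq_rpow] at hHolder
  have hab₀ : 0 ≤ ∫ x, a x * b x ∂μ :=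
    integral_nonneg_of_ae <| by filter_upwards [ha₀, hb₀] with x hax hbx using mul_nonneg hax hbx
  calc (∫ x, a x * b x ∂μ) ^ 2 ≤ (√(∫ x, a x ^ 2 ∂μ) * √(∫ x, b x ^ 2 ∂μ)) ^ 2 := by gcongr
    _ = _ := by
      rw [mul_pow, sq_sqrt (integral_nonneg fun x ↦ sq_nonneg _),
        sq_sqrt (integral_nonneg fun x ↦ sq_nonneg _)]

theorem sq_integral_abs_le_integral_sq_mul_mul_integral_inv {g w : α → ℝ}
    (hg : AEStronglyMeasurable g μ) (hw : AEStronglyMeasurable w μ) (hw₀ : ∀ᵐ x ∂μ, 0 < w x)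
    (hgw : Integrable (fun x ↦ g x ^ 2 * w x) μ) (hw_inv : Integrable (fun x ↦ (w x)⁻¹) μ) :
    (∫ x, |g x| ∂μ) ^ 2 ≤ (∫ x, g x ^ 2 * w x ∂μ) * ∫ x, (w x)⁻¹ ∂μ := by
  have ha_sq : (fun x ↦ (|g x| * √(w x)) ^ 2) =ᵐ[μ] fun x ↦ g x ^ 2 * w x := by
    filter_upwards [hw₀] with x hx
    rw [mul_pow, sq_abs, sq_sqrt hx.le]
  have hb_sq : (fun x ↦ (√(w x))⁻¹ ^ 2) =ᵐ[μ] fun x ↦ (w x)⁻¹ := by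
    filter_upwards [hw₀] with x hx
    rw [inv_pow, sq_sqrt hx.le]
  have hab : (fun x ↦ |g x| * √(w x) * (√(w x))⁻¹) =ᵐ[μ] fun x ↦ |g x| := by
    filter_upwards [hw₀] with x hx
    rw [mul_assoc, mul_inv_cancel₀ (sqrt_pos.2 hx).ne', mul_one]
  have hCS := sq_integral_mul_le_integral_sq_mul_integral_sq
    (a := fun x ↦ |g x| * √(w x)) (b := fun x ↦ (√(w x))⁻¹)
    (.of_forall fun x ↦ by positivity) (.of_forall fun x ↦ by positivity)
    ((memLp_two_iff_integrable_sq (by fun_prop)).2 (hgw.congr ha_sq.symm))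
    ((memLp_two_iff_integrable_sq (by fun_prop)).2 (hw_inv.congr hb_sq.symm))
  rwa [integral_congr_ae hab, integral_congr_ae ha_sq, integral_congr_ae hb_sq] at hCS

theorem MeasureTheory.Integrable.rpow_of_le_one [IsFiniteMeasure μ] {φ : α → ℝ}
    (hφ : Integrable φ μ) (hφ₀ : 0 ≤ᵐ[μ] φ) {q : ℝ} (hq₀ : 0 ≤ q) (hq₁ : q ≤ 1) :
    Integrable (fun x ↦ φ x ^ q) μ := by
  refine ((integrable_const 1).add hφ).mono' (by fun_prop) ?_
  filter_upwards [hφ₀] with x hx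
  rw [norm_of_nonneg (rpow_nonneg hx q)]
  exact rpow_le_one_add hx hq₀ hq₁

theorem integral_rpow_le_rpow_integral [IsProbabilityMeasure μ] {φ : α → ℝ} (hφ : Integrable φ μ)
    (hφ₀ : 0 ≤ᵐ[μ] φ) {q : ℝ} (hq₀ : 0 ≤ q) (hq₁ : q ≤ 1) :
    ∫ x, φ x ^ q ∂μ ≤ (∫ x, φ x ∂μ) ^ q :=
  (concaveOn_rpow hq₀ hq₁).le_map_integral (continuousOn_id.rpow_const fun _ _ ↦ Or.inr hq₀)
    isClosed_Ici hφ₀ hφ (hφ.rpow_of_le_one hφ₀ hq₀ hq₁)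

variable {f : α → ℝ} {β r : ℝ}

theorem integrable_rpow_sq_add_sq [IsFiniteMeasure μ] (hf : Integrable f μ) (hβ : 0 ≤ β)
    (hr₀ : 0 ≤ r) (hr₁ : r ≤ 1) : Integrable (fun x ↦ (f x ^ 2 + β ^ 2) ^ (r / 2)) μ := by
  have hF : Integrable (fun x ↦ |f x| + β) μ := hf.abs.add (integrable_const β)
  have := hf.aestronglyMeasurable.aemeasurable
  refine (hF.rpow_of_le_one (.of_forall fun x ↦ by positivity) hr₀ hr₁).mono'
    (AEMeasurable.aestronglyMeasurable (by fun_prop)) (.of_forall fun x ↦ ?_)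
  rw [norm_of_nonneg (by positivity)]
  exact rpow_sq_add_sq_le (f x) hβ hr₀

theorem integral_rpow_sq_add_sq_le [IsProbabilityMeasure μ] (hf : Integrable f μ) (hβ : 0 ≤ β)
    (hr₀ : 0 ≤ r) (hr₁ : r ≤ 1) :
    ∫ x, (f x ^ 2 + β ^ 2) ^ (r / 2) ∂μ ≤ (∫ x, |f x| ∂μ + β) ^ r := by
  have hF : Integrable (fun x ↦ |f x| + β) μ := hf.abs.add (integrable_const β)
  have hF₀ : 0 ≤ᵐ[μ] fun x ↦ |f x| + β := .of_forall fun x ↦ by positivity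
  calc ∫ x, (f x ^ 2 + β ^ 2) ^ (r / 2) ∂μ ≤ ∫ x, (|f x| + β) ^ r ∂μ :=
        integral_mono (integrable_rpow_sq_add_sq hf hβ hr₀ hr₁) (hF.rpow_of_le_one hF₀ hr₀ hr₁)
          fun x ↦ rpow_sq_add_sq_le (f x) hβ hr₀
    _ ≤ (∫ x, (|f x| + β) ∂μ) ^ r := integral_rpow_le_rpow_integral hF hF₀ hr₀ hr₁
    _ = (∫ x, |f x| ∂μ + β) ^ r := by
      rw [integral_add hf.abs (integrable_const β), integral_const, probReal_univ, one_smul]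

theorem integrable_sq_mul_rpow_sq_add_sq {g : α → ℝ} (hg : MemLp g 2 μ)
    (hf : AEStronglyMeasurable f μ) (hβ : 0 < β) (hr : r ≤ 0) :
    Integrable (fun x ↦ g x ^ 2 * (f x ^ 2 + β ^ 2) ^ r) μ := by
  have := hf.aemeasurable
  refine hg.integrable_sq.mul_bdd (c := (β ^ 2) ^ r)
    (AEMeasurable.aestronglyMeasurable (by fun_prop)) (.of_forall fun x ↦ ?_)
  rw [norm_of_nonneg (by positivity)]
  exact rpow_le_rpow_of_nonpos (by positivity) (by nlinarith) hr

end

theorem stmt_7_general {Ω : Type*} [MeasurableSpace Ω] (τ : Measure Ω) [IsProbabilityMeasure τ]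
    (p β K : ℝ) (hp1 : 1 ≤ p) (hp2 : p ≤ 2) (hβ : 0 < β)
    (f g : Ω → ℝ) (hf : MemLp f 2 τ) (hg : MemLp g 2 τ)
    (hfK : ∫ ω, |f ω| ∂τ ≤ K) :
    (K + β) ^ (p - 2) * (∫ ω, |g ω| ∂τ) ^ 2 ≤
      ∫ ω, (g ω) ^ 2 * ((f ω) ^ 2 + β ^ 2) ^ ((p - 2) / 2) ∂τ := by
  set w : Ω → ℝ := fun ω ↦ ((f ω) ^ 2 + β ^ 2) ^ ((p - 2) / 2)
  have hw_inv : (fun ω ↦ (w ω)⁻¹) = fun ω ↦ ((f ω) ^ 2 + β ^ 2) ^ ((2 - p) / 2) := by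
    ext ω
    rw [← rpow_neg (by positivity)]
    ring_nf
  have hf₁ : Integrable f τ := hf.integrable one_le_two
  have hB : ∫ ω, (w ω)⁻¹ ∂τ ≤ (K + β) ^ (2 - p) := by
    rw [hw_inv]
    exact (integral_rpow_sq_add_sq_le hf₁ hβ.le (by linarith) (by linarith)).trans
      (by gcongr)
  have hw_meas : AEMeasurable w τ := by
    have := hf.aestronglyMeasurable.aemeasurable
    fun_prop
  have hCS := sq_integral_abs_le_integral_sq_mul_mul_integral_inv hg.aestronglyMeasurable
    hw_meas.aestronglyMeasurable (.of_forall fun ω ↦ by positivity)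
    (integrable_sq_mul_rpow_sq_add_sq hg hf.aestronglyMeasurable hβ (by linarith))
    (hw_inv ▸ integrable_rpow_sq_add_sq hf₁ hβ.le (by linarith) (by linarith))
  have hKβ : 0 < K + β := by
    linarith [show 0 ≤ ∫ ω, |f ω| ∂τ from integral_nonneg fun ω ↦ abs_nonneg _]
  calc (K + β) ^ (p - 2) * (∫ ω, |g ω| ∂τ) ^ 2
      ≤ (K + β) ^ (p - 2) * ((∫ ω, g ω ^ 2 * w ω ∂τ) * (K + β) ^ (2 - p)) := by
        gcongr
        exact hCS.trans (mul_le_mul_of_nonneg_left hB (integral_nonneg fun ω ↦ by positivity))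
    _ = ∫ ω, g ω ^ 2 * w ω ∂τ := by
      rw [mul_left_comm, ← rpow_add hKβ, sub_add_sub_cancel', sub_self, rpow_zero, mul_one]

/-- Weighted Cauchy–Schwarz estimate: for a probability measure `τ`, `p ∈ [1,2]`, `β > 0`,
`f, g ∈ L²(τ)` and `‖f‖_{L¹} ≤ K`, it holds
`∫ |g|² (f²+β²)^{(p−2)/2} dτ ≥ (K+β)^{p−2} ‖g‖²_{L¹}`. -/
theorem stmt_7 {Ω : Type*} [MeasurableSpace Ω] (τ : Measure Ω) [IsProbabilityMeasure τ]
    (p β K : ℝ) (hp1 : 1 ≤ p) (hp2 : p ≤ 2) (hβ : 0 < β) (hK : 0 < K)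
    (f g : Ω → ℝ) (hf : MemLp f 2 τ) (hg : MemLp g 2 τ)
    (hfK : ∫ ω, |f ω| ∂τ ≤ K) :
    (K + β) ^ (p - 2) * (∫ ω, |g ω| ∂τ) ^ 2 ≤
      ∫ ω, (g ω) ^ 2 * ((f ω) ^ 2 + β ^ 2) ^ ((p - 2) / 2) ∂τ :=
  stmt_7_general τ p β K hp1 hp2 hβ f g hf hg hfK
end

section
/- Under the difference-of-squares gradient flow d/dt f_t = −2 f_t F'[f_t²−g_t²], d/dt g_t = 2 g_t F'[f_t²−g_t²], the difference h_t := f_t² − g_t² satisfies d/dt h_t = −4 √(h_t² + β²) · F'[h_t] with β = 2 f₀ g₀; i.e., h_t is the mirror flow of 4F for the hyperbolic entropy η_hyp with parameter β, since η_hyp''(s) = (s² + β²)^{−1/2}. -/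
/-!
Along the flow `u' = -a u`, `v' = a v` the product `u v` is conserved, while
`(u² - v²)' = -2a (u² + v²)`. The identity `(u² + v²)² = (u² - v²)² + (2uv)²` together with
the conservation law rewrites `u² + v²` as `√((u² - v²)² + (2 u₀ v₀)²)`.
-/

lemma Real.sqrt_sq_sub_sq_sq_add_two_mul_sq (x y : ℝ) :
    √((x ^ 2 - y ^ 2) ^ 2 + (2 * x * y) ^ 2) = x ^ 2 + y ^ 2 := by
  rw [show (x ^ 2 - y ^ 2) ^ 2 + (2 * x * y) ^ 2 = (x ^ 2 + y ^ 2) ^ 2 by ring]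
  exact Real.sqrt_sq (by positivity)

section OppositeRateFlow

variable {u v a : ℝ → ℝ}
  (hu : ∀ t, HasDerivAt u (-a t * u t) t) (hv : ∀ t, HasDerivAt v (a t * v t) t)
include hu hv

lemma mul_eq_of_hasDerivAt_neg_mul (t s : ℝ) : u t * v t = u s * v s := by
  have hprod : ∀ r, HasDerivAt (fun r => u r * v r) 0 r := fun r =>
    ((hu r).mul (hv r)).congr_deriv (by ring)
  exact is_const_of_deriv_eq_zero (fun r => (hprod r).differentiableAt)
    (fun r => (hprod r).deriv) t s

lemma hasDerivAt_sq_sub_sq_of_hasDerivAt_neg_mul (t : ℝ) :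
    HasDerivAt (fun s => u s ^ 2 - v s ^ 2)
      (-2 * a t * √((u t ^ 2 - v t ^ 2) ^ 2 + (2 * u 0 * v 0) ^ 2)) t := by
  rw [mul_assoc 2, ← mul_eq_of_hasDerivAt_neg_mul hu hv t 0, ← mul_assoc,
    Real.sqrt_sq_sub_sq_sq_add_two_mul_sq]
  exact (((hu t).pow 2).sub ((hv t).pow 2)).congr_deriv (by ring)

end OppositeRateFlow

/-- Difference-of-squares parameterization: under the gradient flow
`d/dt f_t = −2 f_t F'[f_t²−g_t²]`, `d/dt g_t = 2 g_t F'[f_t²−g_t²]`,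
the difference `h_t := f_t² − g_t²` satisfies
`d/dt h_t = −4 √(h_t² + β²) F'[h_t]` with `β = 2 f₀ g₀`; i.e. `h_t` is the
`η_hyp`-mirror flow of `4F` (since `η_hyp''(s) = (s²+β²)^{−1/2}`). -/
theorem stmt_11 {Θ : Type*} (F' : (Θ → ℝ) → Θ → ℝ) (f g : ℝ → Θ → ℝ)
    (hf : ∀ t θ, HasDerivAt (fun s => f s θ)
      (-2 * f t θ * F' (fun x => (f t x) ^ 2 - (g t x) ^ 2) θ) t)
    (hg : ∀ t θ, HasDerivAt (fun s => g s θ)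
      (2 * g t θ * F' (fun x => (f t x) ^ 2 - (g t x) ^ 2) θ) t) :
    ∀ t θ, HasDerivAt (fun s => (f s θ) ^ 2 - (g s θ) ^ 2)
      (-4 * Real.sqrt (((f t θ) ^ 2 - (g t θ) ^ 2) ^ 2 + (2 * f 0 θ * g 0 θ) ^ 2)
        * F' (fun x => (f t x) ^ 2 - (g t x) ^ 2) θ) t := by
  intro t θ
  set a : ℝ → ℝ := fun s => 2 * F' (fun x => (f s x) ^ 2 - (g s x) ^ 2) θ
  have hu : ∀ s, HasDerivAt (fun s => f s θ) (-a s * f s θ) s := fun s =>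
    (hf s θ).congr_deriv (by ring)
  have hv : ∀ s, HasDerivAt (fun s => g s θ) (a s * g s θ) s := fun s =>
    (hg s θ).congr_deriv (by ring)
  exact (hasDerivAt_sq_sub_sq_of_hasDerivAt_neg_mul hu hv t).congr_deriv (by ring)
end
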